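/- arXiv:1404.1546 — 2 statements merged into one kernel-verified Lean document; each statement's English description precedes it below -/
import Mathlib

section
/- Let β ∈ (0,1), suppose f is absolutely continuous on [0,T] with f(T) = 0, g is continuous on [0,T], and I^{1-β} g is absolutely continuous on [0,T]. Then ∫₀ᵀ f(t) D^β_t g(t) dt = ∫₀ᵀ G(t) D^β_t F(t) dt, where F(t) = f(T-t) and G(t) = g(T-t). -/
open MeasureTheory intervalIntegral

/-- The Riemann–Liouville fractional integral
`I^α ψ(t) = (1/Γ(α)) ∫₀ᵗ (t-s)^(α-1) ψ(s) ds`. -/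
noncomputable def fracInt (α : ℝ) (ψ : ℝ → ℝ) (t : ℝ) : ℝ :=
  (1 / Real.Gamma α) * ∫ s in (0:ℝ)..t, (t - s) ^ (α - 1) * ψ s

/-- The Riemann–Liouville derivative `D^β ψ = d/dt (I^{1-β} ψ)`. -/
noncomputable def rlDeriv (β : ℝ) (ψ : ℝ → ℝ) (t : ℝ) : ℝ :=
  deriv (fun u => fracInt (1 - β) ψ u) t

/-!
Writing `f t = -∫ₜᵀ f'` and `I^{1-β} g t = ∫₀ᵗ Dg`, Fubini turns the left side into
`-∫₀ᵀ f' · I^{1-β} g`. The reflection `F = f (T - ·)` is absolutely continuous with `F 0 = 0`, and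
`I^{1-β}` commutes with `∫₀^·`, so `I^{1-β} F = ∫₀^· I^{1-β} F'`; by Lebesgue's differentiation
theorem `D^β F = I^{1-β} F'` almost everywhere. The claim is then the self-adjointness of `I^α`
up to reflection, which is Fubini on the triangle `0 < u ≤ s ≤ T`. The singular kernel is
integrable on the triangle because `(s, u) ↦ (s - u)^(α-1) ψ u` is a convolution integrand.
-/

open Set Filter Function
open scoped Topology

/-- The triangle `0 < u ≤ s ≤ T`, as a set of pairs `(s, u)`. -/
def triangle (T : ℝ) : Set (ℝ × ℝ) := {p | 0 < p.2 ∧ p.2 ≤ p.1 ∧ p.1 ≤ T}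

lemma measurableSet_triangle (T : ℝ) : MeasurableSet (triangle T) :=
  (measurableSet_lt measurable_const measurable_snd).inter
    ((measurableSet_le measurable_snd measurable_fst).inter
      (measurableSet_le measurable_fst measurable_const))

lemma triangle_subset_prod (T : ℝ) : triangle T ⊆ Ioc 0 T ×ˢ Ioc 0 T :=
  fun _ ⟨h0, hus, hsT⟩ => ⟨⟨h0.trans_le hus, hsT⟩, ⟨h0, hus.trans hsT⟩⟩

lemma integral_indicator_triangle_left (T : ℝ) (e : ℝ → ℝ → ℝ) (s : ℝ) :
    ∫ u, (triangle T).indicator (uncurry e) (s, u) =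
      (Ioc 0 T).indicator (fun s => ∫ u in 0..s, e s u) s := by
  by_cases hs : s ∈ Ioc 0 T
  · rw [indicator_of_mem hs, integral_of_le hs.1.le,
      ← MeasureTheory.integral_indicator measurableSet_Ioc]
    congr 1 with u
    simp only [indicator, triangle, mem_ofPred_eq, mem_Ioc, uncurry_apply_pair]
    congr 1
    exact propext ⟨fun h => ⟨h.1, h.2.1⟩, fun h => ⟨h.1, h.2, hs.2⟩⟩
  · rw [indicator_of_notMem hs]
    refine integral_eq_zero_of_ae (Eventually.of_forall fun u => indicator_of_notMem ?_ _)
    exact fun h => hs ⟨h.1.trans_le h.2.1, h.2.2⟩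

lemma integral_indicator_triangle_right (T : ℝ) (e : ℝ → ℝ → ℝ) (u : ℝ) :
    ∫ s, (triangle T).indicator (uncurry e) (s, u) =
      (Ioc 0 T).indicator (fun u => ∫ s in u..T, e s u) u := by
  by_cases hu : u ∈ Ioc 0 T
  · rw [indicator_of_mem hu, integral_of_le hu.2, ← integral_Icc_eq_integral_Ioc,
      ← MeasureTheory.integral_indicator measurableSet_Icc]
    congr 1 with s
    simp only [indicator, triangle, mem_ofPred_eq, mem_Icc, uncurry_apply_pair]
    congr 1
    exact propext ⟨fun h => h.2, fun h => ⟨hu.1, h⟩⟩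
  · rw [indicator_of_notMem hu]
    refine integral_eq_zero_of_ae (Eventually.of_forall fun s => indicator_of_notMem ?_ _)
    exact fun h => hu ⟨h.1, h.2.1.trans h.2.2⟩

lemma integral_integral_triangle_swap {T : ℝ} (hT : 0 ≤ T) {e : ℝ → ℝ → ℝ}
    (he : IntegrableOn (uncurry e) (triangle T)) :
    ∫ s in 0..T, ∫ u in 0..s, e s u = ∫ u in 0..T, ∫ s in u..T, e s u := by
  have hind : Integrable (uncurry fun s u => (triangle T).indicator (uncurry e) (s, u))
      (volume.prod volume) :=
    (integrable_indicator_iff (measurableSet_triangle T)).2 he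
  calc ∫ s in 0..T, ∫ u in 0..s, e s u
      = ∫ s, ∫ u, (triangle T).indicator (uncurry e) (s, u) := by
        simp only [integral_indicator_triangle_left, integral_of_le hT,
          MeasureTheory.integral_indicator measurableSet_Ioc]
    _ = ∫ u, ∫ s, (triangle T).indicator (uncurry e) (s, u) := integral_integral_swap hind
    _ = ∫ u in 0..T, ∫ s in u..T, e s u := by
        simp only [integral_indicator_triangle_right, integral_of_le hT,
          MeasureTheory.integral_indicator measurableSet_Ioc]

lemma integral_sub_rpow_left {α : ℝ} (hα : 0 < α) (u t : ℝ) :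
    ∫ s in u..t, (t - s) ^ (α - 1) = (t - u) ^ α / α := by
  rw [intervalIntegral.integral_comp_sub_left (fun x => x ^ (α - 1)) t, sub_self,
    integral_rpow (Or.inl (by linarith)), sub_add_cancel, Real.zero_rpow hα.ne', sub_zero]

lemma integral_sub_rpow_right {α : ℝ} (hα : 0 < α) (u t : ℝ) :
    ∫ s in u..t, (s - u) ^ (α - 1) = (t - u) ^ α / α := by
  rw [intervalIntegral.integral_comp_sub_right (fun x => x ^ (α - 1)) u, sub_self,
    integral_rpow (Or.inl (by linarith)), sub_add_cancel, Real.zero_rpow hα.ne', sub_zero]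

lemma integrable_indicator_rpow {α : ℝ} (hα : 0 < α) (T : ℝ) :
    Integrable ((Icc 0 T).indicator fun x : ℝ => x ^ (α - 1)) := by
  rw [integrable_indicator_iff measurableSet_Icc, integrableOn_Icc_iff_integrableOn_Ioc]
  exact (intervalIntegrable_rpow' (by linarith)).1

lemma integrableOn_triangle_mul_prod {T : ℝ} {φ ψ : ℝ → ℝ}
    (hφ : IntervalIntegrable φ volume 0 T) (hψ : IntervalIntegrable ψ volume 0 T) :
    IntegrableOn (fun p : ℝ × ℝ => φ p.1 * ψ p.2) (triangle T) := by
  have h := hφ.1.mul_prod hψ.1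
  rw [Measure.prod_restrict] at h
  exact IntegrableOn.mono_set h (triangle_subset_prod T)

lemma integrableOn_triangle_rpow_mul {α T : ℝ} (hα : 0 < α) {ψ : ℝ → ℝ}
    (hψ : IntervalIntegrable ψ volume 0 T) :
    IntegrableOn (fun p : ℝ × ℝ => (p.1 - p.2) ^ (α - 1) * ψ p.2) (triangle T) := by
  have h := ((integrable_indicator_iff measurableSet_Ioc).2 hψ.1).convolution_integrand
    (ContinuousLinearMap.mul ℝ ℝ) (integrable_indicator_rpow hα T)
  refine h.integrableOn.congr_fun (fun p hp => ?_) (measurableSet_triangle T)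
  obtain ⟨h0, hus, hsT⟩ := hp
  simp only [ContinuousLinearMap.mul_apply']
  rw [indicator_of_mem (show p.2 ∈ Ioc 0 T from ⟨h0, hus.trans hsT⟩),
    indicator_of_mem (show p.1 - p.2 ∈ Icc 0 T from ⟨by linarith, by linarith⟩), mul_comm]

lemma integrableOn_triangle_mul_rpow_mul {α T : ℝ} (hα : 0 < α) {φ ψ : ℝ → ℝ}
    (hφ : IntervalIntegrable φ volume 0 T) (hψ : ContinuousOn ψ (Icc 0 T)) :
    IntegrableOn (fun p : ℝ × ℝ => φ p.1 * ((p.1 - p.2) ^ (α - 1) * ψ p.2)) (triangle T) := by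
  obtain ⟨M, hM⟩ := isCompact_Icc.exists_bound_of_continuousOn hψ
  -- in the coordinates `(u, s)`, `φ s * k (s - u)` is the convolution integrand of `φ` and `k (-·)`
  have hker := ((integrable_indicator_iff measurableSet_Ioc).2 hφ.1).convolution_integrand
    (ContinuousLinearMap.mul ℝ ℝ) (integrable_indicator_rpow hα T).comp_neg
  have hψ' : AEStronglyMeasurable ((Icc 0 T).indicator ψ) :=
    (aestronglyMeasurable_indicator_iff measurableSet_Icc).2
      (hψ.aestronglyMeasurable measurableSet_Icc)
  have h := hker.swap.mul_bdd (c := max M 0) hψ'.comp_snd (Eventually.of_forall fun p => ?_)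
  · refine h.integrableOn.congr_fun (fun p hp => ?_) (measurableSet_triangle T)
    obtain ⟨h0, hus, hsT⟩ := hp
    simp only [comp_apply, Prod.fst_swap, Prod.snd_swap, ContinuousLinearMap.mul_apply', neg_sub]
    rw [indicator_of_mem (show p.1 ∈ Ioc 0 T from ⟨h0.trans_le hus, hsT⟩),
      indicator_of_mem (show p.1 - p.2 ∈ Icc 0 T from ⟨by linarith, by linarith⟩),
      indicator_of_mem (show p.2 ∈ Icc 0 T from ⟨h0.le, hus.trans hsT⟩), mul_assoc]
  · by_cases hp : p.2 ∈ Icc 0 T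
    · rw [indicator_of_mem hp]
      exact le_max_of_le_left (hM _ hp)
    · simp [indicator_of_notMem hp]

lemma intervalIntegrable_sub_rpow {α : ℝ} (hα : 0 < α) (u t : ℝ) :
    IntervalIntegrable (fun s => (t - s) ^ (α - 1)) volume u t := by
  simpa using ((intervalIntegrable_rpow' (r := α - 1) (by linarith)).comp_sub_left t
    (a := t - u) (b := 0))

lemma fracInt_congr {α t : ℝ} (ht : 0 ≤ t) {φ ψ : ℝ → ℝ} (h : ∀ s ∈ Icc 0 t, φ s = ψ s) :
    fracInt α φ t = fracInt α ψ t := by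
  unfold fracInt
  congr 1
  refine integral_congr fun s hs => ?_
  rw [uIcc_of_le ht] at hs
  simp only [h s hs]

lemma fracInt_integral_eq_integral_fracInt {α t : ℝ} (hα : 0 < α) (ht : 0 ≤ t) {h : ℝ → ℝ}
    (hh : IntervalIntegrable h volume 0 t) :
    fracInt α (fun s => ∫ u in 0..s, h u) t = ∫ s in 0..t, fracInt α h s := by
  have hleft : ∫ s in 0..t, (t - s) ^ (α - 1) * ∫ u in 0..s, h u
      = ∫ u in 0..t, (t - u) ^ α / α * h u := by
    simp only [← intervalIntegral.integral_const_mul]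
    rw [integral_integral_triangle_swap ht (e := fun s u => (t - s) ^ (α - 1) * h u)
      (integrableOn_triangle_mul_prod (intervalIntegrable_sub_rpow hα 0 t) hh)]
    simp only [intervalIntegral.integral_mul_const, integral_sub_rpow_left hα]
  have hright : ∫ s in 0..t, ∫ u in 0..s, (s - u) ^ (α - 1) * h u
      = ∫ u in 0..t, (t - u) ^ α / α * h u := by
    rw [integral_integral_triangle_swap ht (e := fun s u => (s - u) ^ (α - 1) * h u)
      (integrableOn_triangle_rpow_mul hα hh)]
    simp only [intervalIntegral.integral_mul_const, integral_sub_rpow_right hα]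
  simp only [fracInt, intervalIntegral.integral_const_mul, hleft, hright]

lemma intervalIntegrable_fracInt {α T : ℝ} (hα : 0 < α) (hT : 0 ≤ T) {h : ℝ → ℝ}
    (hh : IntervalIntegrable h volume 0 T) : IntervalIntegrable (fracInt α h) volume 0 T := by
  have hint : Integrable fun s => ∫ u, (triangle T).indicator
      (uncurry fun s u => (s - u) ^ (α - 1) * h u) (s, u) :=
    ((integrable_indicator_iff (measurableSet_triangle T)).2
      (integrableOn_triangle_rpow_mul hα hh)).integral_prod_left
  simp only [integral_indicator_triangle_left] at hint
  rw [integrable_indicator_iff measurableSet_Ioc] at hint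
  exact ((intervalIntegrable_iff_integrableOn_Ioc_of_le hT).2 hint).const_mul _

lemma rlDeriv_ae_eq_fracInt {β T : ℝ} (hβ : β < 1) (hT : 0 ≤ T) {F h : ℝ → ℝ}
    (hh : IntervalIntegrable h volume 0 T) (hF : ∀ s ∈ Icc 0 T, F s = ∫ u in 0..s, h u) :
    ∀ᵐ t, t ∈ Ioo 0 T → rlDeriv β F t = fracInt (1 - β) h t := by
  have hα : 0 < 1 - β := by linarith
  filter_upwards [(intervalIntegrable_fracInt hα hT hh).ae_hasDerivAt_integral] with t hderiv ht
  have hloc : fracInt (1 - β) F =ᶠ[𝓝 t] fun x => ∫ s in 0..x, fracInt (1 - β) h s := by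
    filter_upwards [Ioo_mem_nhds ht.1 ht.2] with x hx
    rw [fracInt_congr hx.1.le fun s hs => hF s ⟨hs.1, hs.2.trans hx.2.le⟩,
      fracInt_integral_eq_integral_fracInt hα hx.1.le (hh.mono_set (uIcc_subset_uIcc_left
        (by rw [uIcc_of_le hT]; exact ⟨hx.1.le, hx.2.le⟩)))]
  rw [uIcc_of_le hT] at hderiv
  exact ((hderiv (Ioo_subset_Icc_self ht) 0 ⟨le_rfl, hT⟩).congr_of_eventuallyEq hloc).deriv

lemma fracInt_reflect (α T : ℝ) (φ : ℝ → ℝ) (u : ℝ) :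
    fracInt α (fun v => φ (T - v)) (T - u) =
      1 / Real.Gamma α * ∫ s in u..T, (s - u) ^ (α - 1) * φ s := by
  have h := intervalIntegral.integral_comp_sub_left (fun s => (s - u) ^ (α - 1) * φ s)
    (a := 0) (b := T - u) T
  rw [sub_sub_cancel, sub_zero] at h
  rw [fracInt, ← h]
  congr 1
  refine integral_congr fun v _ => ?_
  simp only [sub_right_comm]

lemma integral_mul_fracInt_eq_integral_reflect {α T : ℝ} (hα : 0 < α) (hT : 0 ≤ T)
    {φ ψ : ℝ → ℝ} (hφ : IntervalIntegrable φ volume 0 T) (hψ : ContinuousOn ψ (Icc 0 T)) :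
    ∫ s in 0..T, φ s * fracInt α ψ s =
      ∫ t in 0..T, ψ (T - t) * fracInt α (fun v => φ (T - v)) t := by
  have hreflect := intervalIntegral.integral_comp_sub_left
    (fun u => ψ u * fracInt α (fun v => φ (T - v)) (T - u)) (a := 0) (b := T) T
  simp only [sub_sub_cancel, sub_self, sub_zero] at hreflect
  calc ∫ s in 0..T, φ s * fracInt α ψ s
      = 1 / Real.Gamma α * ∫ s in 0..T, ∫ u in 0..s, φ s * ((s - u) ^ (α - 1) * ψ u) := by
        rw [← intervalIntegral.integral_const_mul]
        refine integral_congr fun s _ => ?_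
        simp only [fracInt, intervalIntegral.integral_const_mul]
        ring
    _ = 1 / Real.Gamma α * ∫ u in 0..T, ∫ s in u..T, φ s * ((s - u) ^ (α - 1) * ψ u) := by
        rw [integral_integral_triangle_swap hT (e := fun s u => φ s * ((s - u) ^ (α - 1) * ψ u))
          (integrableOn_triangle_mul_rpow_mul hα hφ hψ)]
    _ = ∫ u in 0..T, ψ u * fracInt α (fun v => φ (T - v)) (T - u) := by
        simp only [fracInt_reflect, ← intervalIntegral.integral_const_mul]
        refine integral_congr fun u _ => integral_congr fun s _ => ?_
        ring
    _ = ∫ t in 0..T, ψ (T - t) * fracInt α (fun v => φ (T - v)) t := hreflect.symm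

lemma integral_integral_mul_eq_integral_mul_integral {T : ℝ} (hT : 0 ≤ T) {φ ψ : ℝ → ℝ}
    (hφ : IntervalIntegrable φ volume 0 T) (hψ : IntervalIntegrable ψ volume 0 T) :
    ∫ t in 0..T, (∫ s in t..T, φ s) * ψ t = ∫ s in 0..T, φ s * ∫ u in 0..s, ψ u := by
  have h := integral_integral_triangle_swap hT (e := fun s u => φ s * ψ u)
    (integrableOn_triangle_mul_prod hφ hψ)
  simp only [intervalIntegral.integral_const_mul, intervalIntegral.integral_mul_const] at h
  exact h.symm

lemma eq_integral_neg_of_eq_add_integral {T : ℝ} {f f' : ℝ → ℝ}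
    (hf' : IntervalIntegrable f' volume 0 T) (hf : ∀ t ∈ Icc 0 T, f t = f 0 + ∫ s in 0..t, f' s)
    (hfT : f T = 0) {t : ℝ} (ht : t ∈ Icc 0 T) :
    f t = ∫ s in t..T, -f' s := by
  have hsub := integral_interval_sub_left hf' (hf'.mono_set (uIcc_subset_uIcc_left
    (by rw [uIcc_of_le (ht.1.trans ht.2)]; exact ht)))
  rw [intervalIntegral.integral_neg, ← hsub, hf t ht]
  linarith [hf T ⟨ht.1.trans ht.2, le_rfl⟩]

/-- Fractional integration by parts: if `f` is absolutely continuous on `[0,T]` with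
`f(T) = 0`, `g` is continuous on `[0,T]` and `I^{1-β} g` is absolutely continuous with
a.e. derivative `Dg` (so `D^β g = Dg`), then
`∫₀ᵀ f(t) D^β g(t) dt = ∫₀ᵀ G(t) D^β F(t) dt` where `F(t) = f(T-t)`, `G(t) = g(T-t)`. -/
theorem frac_integration_by_parts (T β : ℝ) (hT : 0 < T) (hβ : β ∈ Set.Ioo (0:ℝ) 1)
    (f f' g Dg : ℝ → ℝ)
    (hf' : IntervalIntegrable f' volume 0 T)
    (hf : ∀ t ∈ Set.Icc (0:ℝ) T, f t = f 0 + ∫ s in (0:ℝ)..t, f' s)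
    (hfT : f T = 0)
    (hg : ContinuousOn g (Set.Icc 0 T))
    (hDg : IntervalIntegrable Dg volume 0 T)
    (hACg : ∀ t ∈ Set.Icc (0:ℝ) T, fracInt (1 - β) g t = ∫ s in (0:ℝ)..t, Dg s) :
    ∫ t in (0:ℝ)..T, f t * Dg t =
      ∫ t in (0:ℝ)..T, g (T - t) * rlDeriv β (fun s => f (T - s)) t := by
  have hα : 0 < 1 - β := by linarith [hβ.2]
  have hF : ∀ s ∈ Icc 0 T, f (T - s) = ∫ u in 0..s, -f' (T - u) := fun s hs => by
    rw [eq_integral_neg_of_eq_add_integral hf' hf hfT ⟨by linarith [hs.2], by linarith [hs.1]⟩,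
      intervalIntegral.integral_comp_sub_left (fun v => -f' v) T, sub_zero]
  have hf'_reflect : IntervalIntegrable (fun u => f' (T - u)) volume 0 T := by
    simpa using (hf'.comp_sub_left T).symm
  have hDF := rlDeriv_ae_eq_fracInt (h := fun u => -f' (T - u)) hβ.2 hT.le hf'_reflect.neg hF
  calc ∫ t in 0..T, f t * Dg t
      = ∫ t in 0..T, (∫ s in t..T, -f' s) * Dg t := integral_congr fun t ht => by
        rw [uIcc_of_le hT.le] at ht
        simp only [eq_integral_neg_of_eq_add_integral hf' hf hfT ht]
    _ = ∫ s in 0..T, -f' s * fracInt (1 - β) g s := by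
        rw [integral_integral_mul_eq_integral_mul_integral (φ := fun s => -f' s) hT.le hf'.neg hDg]
        refine integral_congr fun s hs => ?_
        rw [uIcc_of_le hT.le] at hs
        simp only [hACg s hs]
    _ = ∫ t in 0..T, g (T - t) * fracInt (1 - β) (fun v => -f' (T - v)) t :=
        integral_mul_fracInt_eq_integral_reflect hα hT.le hf'.neg hg
    _ = ∫ t in 0..T, g (T - t) * rlDeriv β (fun s => f (T - s)) t := by
        simp only [integral_of_le hT.le, integral_Ioc_eq_integral_Ioo]
        refine setIntegral_congr_ae measurableSet_Ioo ?_
        filter_upwards [hDF] with t hDFt ht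
        rw [hDFt ht]
end

section
/- Fractional Gronwall lemma: Suppose b > 0, β ∈ (0,1), a(t) is a nonnegative nondecreasing locally integrable function on [0,T), and η(t) is nonnegative locally integrable on [0,T) satisfying η(t) ≤ a(t) + b ∫₀ᵗ (t-s)^{β-1} η(s) ds for all t < T. Then η(t) ≤ a(t) E_β(b Γ(β) t^β), where E_β is the Mittag-Leffler function. -/
/-!
Work with the `ℝ≥0∞`-valued function `φ = (η⁺)·1_{(0,t]}`, so that no integrability side
conditions arise. With the normalized Riemann–Liouville kernels `k_γ(x) = x^{γ-1}/Γ(γ)` (`x > 0`),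
the hypothesis becomes `φ ≤ a(t)·k₁ + bΓ(β)·(φ ⋆ k_β)` on `(-∞, t]` (using that `a` is
nondecreasing), and the semigroup law `k_γ ⋆ k_δ = k_{γ+δ}`, a Beta integral, lets one iterate it:
`φ(t) ≤ a(t) Σ_{j ≤ n} (bΓ(β))^j k_{βj+1}(t) + (bΓ(β))^{n+1} (φ ⋆ k_{β(n+1)})(t)`.
The sum is a partial sum of `a(t) E_β(bΓ(β)t^β)`. Once `β(n+1) ≥ 1` the remainder is at most
`(β/t)·m·z^m/Γ(βm+1)·∫φ` with `m = n+1`, `z = bΓ(β)t^β`, which tends to zero because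
`Γ(x+1) ≥ e^{-(A+1)}A^x` makes the Mittag-Leffler series converge geometrically.
-/

open MeasureTheory intervalIntegral

/-- The Mittag-Leffler function `E_β(z) = Σ_{k≥0} z^k/Γ(βk+1)`. -/
noncomputable def mittagLeffler (β z : ℝ) : ℝ :=
  ∑' k : ℕ, z ^ k / Real.Gamma (β * k + 1)

open Set Filter Topology
open scoped ENNReal

lemma exp_neg_add_one_mul_rpow_le_Gamma_add_one {x A : ℝ} (hx : 0 ≤ x) (hA : 0 < A) :
    Real.exp (-(A + 1)) * A ^ x ≤ Real.Gamma (x + 1) := by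
  have hint := Real.GammaIntegral_convergent (by linarith : (0:ℝ) < x + 1)
  rw [Real.Gamma_eq_integral (by linarith)]
  simp only [add_sub_cancel_right] at hint ⊢
  have hsub : Ioc A (A + 1) ⊆ Ioi 0 := fun u hu => hA.trans hu.1
  calc Real.exp (-(A + 1)) * A ^ x
      = Real.exp (-(A + 1)) * A ^ x * volume.real (Ioc A (A + 1)) := by simp
    _ ≤ ∫ u in Ioc A (A + 1), Real.exp (-u) * u ^ x := by
      refine setIntegral_ge_of_const_le_real measurableSet_Ioc (by simp) (fun u hu => ?_)
        (hint.mono_set hsub)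
      exact mul_le_mul (Real.exp_le_exp.2 (neg_le_neg hu.2))
        (Real.rpow_le_rpow hA.le hu.1.le hx) (by positivity) (Real.exp_pos _).le
    _ ≤ ∫ u in Ioi 0, Real.exp (-u) * u ^ x :=
      setIntegral_mono_set hint
        (ae_restrict_of_forall_mem measurableSet_Ioi fun u (hu : 0 < u) => by
          simp only [Pi.zero_apply]; positivity)
        hsub.eventuallyLE

/-- Take `A = (z + 1) ^ β⁻¹` in `exp_neg_add_one_mul_rpow_le_Gamma_add_one`. -/
lemma mittagLeffler_term_le {β z : ℝ} (hβ : 0 < β) (hz : 0 ≤ z) (k : ℕ) :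
    z ^ k / Real.Gamma (β * k + 1) ≤ Real.exp ((z + 1) ^ β⁻¹ + 1) * (z / (z + 1)) ^ k := by
  set A : ℝ := (z + 1) ^ β⁻¹
  have hz1 : 0 < z + 1 := by linarith
  have hAk : A ^ (β * k) = (z + 1) ^ k := by
    rw [← Real.rpow_mul hz1.le, inv_mul_cancel_left₀ hβ.ne', Real.rpow_natCast]
  have hΓ := exp_neg_add_one_mul_rpow_le_Gamma_add_one (x := β * k) (by positivity)
    (Real.rpow_pos_of_pos hz1 β⁻¹)
  rw [hAk] at hΓ
  rw [div_le_iff₀ (Real.Gamma_pos_of_pos (by positivity))]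
  calc z ^ k = Real.exp (A + 1) * (z / (z + 1)) ^ k * (Real.exp (-(A + 1)) * (z + 1) ^ k) := by
        rw [div_pow, Real.exp_neg]; field_simp
    _ ≤ _ := by gcongr

lemma summable_mittagLeffler {β z : ℝ} (hβ : 0 < β) (hz : 0 ≤ z) :
    Summable fun k : ℕ => z ^ k / Real.Gamma (β * k + 1) :=
  Summable.of_nonneg_of_le (fun k => by positivity) (mittagLeffler_term_le hβ hz)
    ((summable_geometric_of_lt_one (by positivity)
      ((div_lt_one (by linarith)).2 (by linarith))).mul_left _)

lemma tendsto_nat_mul_mittagLeffler_term {β z : ℝ} (hβ : 0 < β) (hz : 0 ≤ z) :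
    Tendsto (fun n : ℕ => n * (z ^ n / Real.Gamma (β * n + 1))) atTop (𝓝 0) := by
  refine squeeze_zero (fun n => by positivity) (fun n => ?_)
    (summable_mittagLeffler hβ (by positivity : 0 ≤ 2 * z)).tendsto_atTop_zero
  rw [mul_pow, mul_div_assoc]
  gcongr
  exact_mod_cast (Nat.lt_two_pow_self).le

lemma mittagLeffler_zero (β : ℝ) : mittagLeffler β 0 = 1 := by
  rw [mittagLeffler, tsum_eq_single 0 fun k hk => by simp [hk]]
  simp

lemma mittagLeffler_nonneg {β z : ℝ} (hβ : 0 ≤ β) (hz : 0 ≤ z) :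
    0 ≤ mittagLeffler β z :=
  tsum_nonneg fun k =>
    div_nonneg (pow_nonneg hz k) (Real.Gamma_nonneg_of_nonneg (by positivity))

noncomputable def riemannLiouvilleKernel (γ : ℝ) : ℝ → ℝ≥0∞ :=
  (Ioi 0).indicator fun x => ENNReal.ofReal (x ^ (γ - 1) / Real.Gamma γ)

lemma riemannLiouvilleKernel_of_pos {γ x : ℝ} (hx : 0 < x) :
    riemannLiouvilleKernel γ x = ENNReal.ofReal (x ^ (γ - 1) / Real.Gamma γ) :=
  indicator_of_mem hx _

lemma riemannLiouvilleKernel_of_nonpos {γ x : ℝ} (hx : x ≤ 0) :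
    riemannLiouvilleKernel γ x = 0 :=
  indicator_of_notMem (not_lt.2 hx) _

@[fun_prop]
lemma measurable_riemannLiouvilleKernel (γ : ℝ) : Measurable (riemannLiouvilleKernel γ) :=
  (by fun_prop : Measurable fun x : ℝ => ENNReal.ofReal (x ^ (γ - 1) / Real.Gamma γ)).indicator
    measurableSet_Ioi

lemma lconvolution_riemannLiouvilleKernel_apply (f : ℝ → ℝ≥0∞) (γ x : ℝ) :
    (f ⋆ₗ riemannLiouvilleKernel γ) x
      = ∫⁻ y in Iio x, f y * ENNReal.ofReal ((x - y) ^ (γ - 1) / Real.Gamma γ) := by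
  rw [lconvolution_def, ← lintegral_indicator measurableSet_Iio]
  congr 1 with y
  by_cases hy : y < x
  · rw [indicator_of_mem (mem_Iio.2 hy), neg_add_eq_sub,
      riemannLiouvilleKernel_of_pos (sub_pos.2 hy)]
  · rw [indicator_of_notMem (by simpa using hy), riemannLiouvilleKernel_of_nonpos (by linarith),
      mul_zero]

lemma lintegral_rpow_mul_one_sub_rpow {p q : ℝ} (hp : 0 < p) (hq : 0 < q) :
    ∫⁻ u in Ioo 0 1, ENNReal.ofReal (u ^ (p - 1) * (1 - u) ^ (q - 1))
      = ENNReal.ofReal (ProbabilityTheory.beta p q) := by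
  have hB := ProbabilityTheory.beta_pos hp hq
  have h := ProbabilityTheory.lintegral_betaPDF_eq_one hp hq
  simp_rw [ProbabilityTheory.lintegral_betaPDF, mul_assoc,
    ENNReal.ofReal_mul (one_div_pos.2 hB).le] at h
  rw [lintegral_const_mul' _ _ ENNReal.ofReal_ne_top, one_div, ENNReal.ofReal_inv_of_pos hB,
    mul_comm] at h
  rw [ENNReal.eq_inv_of_mul_eq_one_left h, inv_inv]

lemma setLIntegral_Ioo_eq_mul_setLIntegral_Ioo_zero_one (f : ℝ → ℝ≥0∞) {x : ℝ}
    (hx : 0 < x) :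
    ∫⁻ y in Ioo 0 x, f y = ENNReal.ofReal x * ∫⁻ u in Ioo 0 1, f (x * u) := by
  have h := lintegral_image_eq_lintegral_abs_deriv_mul (measurableSet_Ioo (a := 0) (b := 1))
    (fun u _ => ((hasDerivAt_id' u).const_mul x).hasDerivWithinAt)
    (mul_right_injective₀ hx.ne').injOn f
  rw [image_mul_left_Ioo hx, mul_zero, mul_one] at h
  rw [h, ← lintegral_const_mul' _ _ ENNReal.ofReal_ne_top]
  simp [abs_of_pos hx]

lemma riemannLiouvilleKernel_lconvolution {γ δ : ℝ} (hγ : 0 < γ) (hδ : 0 < δ) :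
    riemannLiouvilleKernel γ ⋆ₗ riemannLiouvilleKernel δ
      = riemannLiouvilleKernel (γ + δ) := by
  ext x
  rw [lconvolution_riemannLiouvilleKernel_apply]
  rcases le_or_gt x 0 with hx | hx
  · rw [riemannLiouvilleKernel_of_nonpos hx, ← lintegral_zero]
    refine setLIntegral_congr_fun measurableSet_Iio fun y hy => ?_
    rw [riemannLiouvilleKernel_of_nonpos (hy.out.le.trans hx), zero_mul]
  calc ∫⁻ y in Iio x,
        riemannLiouvilleKernel γ y * ENNReal.ofReal ((x - y) ^ (δ - 1) / Real.Gamma δ)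
      = ∫⁻ y in Ioo 0 x, ENNReal.ofReal (y ^ (γ - 1) / Real.Gamma γ)
          * ENNReal.ofReal ((x - y) ^ (δ - 1) / Real.Gamma δ) := by
        rw [← Ioi_inter_Iio, ← Measure.restrict_restrict measurableSet_Ioi,
          ← lintegral_indicator measurableSet_Ioi]
        simp only [riemannLiouvilleKernel, indicator_mul_left]
    _ = ∫⁻ u in Ioo 0 1, ENNReal.ofReal (x ^ (γ + δ - 1) / (Real.Gamma γ * Real.Gamma δ))
          * ENNReal.ofReal (u ^ (γ - 1) * (1 - u) ^ (δ - 1)) := by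
        rw [setLIntegral_Ioo_eq_mul_setLIntegral_Ioo_zero_one _ hx,
          ← lintegral_const_mul' _ _ ENNReal.ofReal_ne_top]
        refine setLIntegral_congr_fun measurableSet_Ioo fun u hu => ?_
        have hu0 : 0 < u := hu.1
        have hu1 : 0 ≤ 1 - u := by linarith [hu.2]
        rw [← ENNReal.ofReal_mul (by positivity), ← ENNReal.ofReal_mul hx.le,
          ← ENNReal.ofReal_mul (by positivity)]
        congr 1
        rw [show x - x * u = x * (1 - u) by ring, Real.mul_rpow hx.le hu.1.le,
          Real.mul_rpow hx.le hu1, show γ + δ - 1 = 1 + (γ - 1) + (δ - 1) by ring,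
          Real.rpow_add hx, Real.rpow_add hx, Real.rpow_one]
        ring
    _ = riemannLiouvilleKernel (γ + δ) x := by
        rw [lintegral_const_mul' _ _ ENNReal.ofReal_ne_top, lintegral_rpow_mul_one_sub_rpow hγ hδ,
          ← ENNReal.ofReal_mul (by positivity), riemannLiouvilleKernel_of_pos hx,
          ProbabilityTheory.beta]
        congr 1
        field_simp

section Gronwall

variable {β : ℝ} {φ : ℝ → ℝ≥0∞} {c l : ℝ≥0∞} {t : ℝ}

lemma lconvolution_riemannLiouvilleKernel_le (hβ : 0 < β) (hφ : AEMeasurable φ)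
    (h : ∀ y ≤ t,
      φ y ≤ c * riemannLiouvilleKernel 1 y + l * (φ ⋆ₗ riemannLiouvilleKernel β) y)
    {γ : ℝ} (hγ : 0 < γ) :
    (φ ⋆ₗ riemannLiouvilleKernel γ) t
      ≤ c * riemannLiouvilleKernel (1 + γ) t
        + l * (φ ⋆ₗ riemannLiouvilleKernel (β + γ)) t := by
  calc (φ ⋆ₗ riemannLiouvilleKernel γ) t
      ≤ ((fun y => c * riemannLiouvilleKernel 1 y + l * (φ ⋆ₗ riemannLiouvilleKernel β) y)
          ⋆ₗ riemannLiouvilleKernel γ) t := by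
        refine lintegral_mono fun y => ?_
        rcases le_or_gt y t with hy | hy
        · gcongr; exact h y hy
        · rw [riemannLiouvilleKernel_of_nonpos (by linarith), mul_zero, mul_zero]
    _ = c * (riemannLiouvilleKernel 1 ⋆ₗ riemannLiouvilleKernel γ) t
          + l * ((φ ⋆ₗ riemannLiouvilleKernel β) ⋆ₗ riemannLiouvilleKernel γ) t := by
        simp only [lconvolution_def, add_mul, mul_assoc]
        rw [lintegral_add_left (by fun_prop), lintegral_const_mul _ (by fun_prop),
          lintegral_const_mul'' _ (by fun_prop)]
    _ = _ := by
        rw [riemannLiouvilleKernel_lconvolution one_pos hγ, ← lconvolution_assoc₀ hφ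
          (measurable_riemannLiouvilleKernel β).aemeasurable
          (measurable_riemannLiouvilleKernel γ).aemeasurable,
          riemannLiouvilleKernel_lconvolution hβ hγ]

lemma le_sum_add_lconvolution_riemannLiouvilleKernel (hβ : 0 < β) (hφ : AEMeasurable φ)
    (h : ∀ y ≤ t,
      φ y ≤ c * riemannLiouvilleKernel 1 y + l * (φ ⋆ₗ riemannLiouvilleKernel β) y)
    (n : ℕ) :
    φ t ≤ c * ∑ j ∈ Finset.range (n + 1), l ^ j * riemannLiouvilleKernel (β * j + 1) t
      + l ^ (n + 1) * (φ ⋆ₗ riemannLiouvilleKernel (β * ↑(n + 1))) t := by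
  induction n with
  | zero => simpa using h t le_rfl
  | succ n ih =>
    have key :=
      lconvolution_riemannLiouvilleKernel_le hβ hφ h (γ := β * ↑(n + 1)) (by positivity)
    rw [show 1 + β * ↑(n + 1) = β * ↑(n + 1) + 1 by ring,
      show β + β * ↑(n + 1) = β * ↑(n + 1 + 1) by push_cast; ring] at key
    calc φ t ≤ _ := ih
      _ ≤ c * ∑ j ∈ Finset.range (n + 1), l ^ j * riemannLiouvilleKernel (β * j + 1) t
          + l ^ (n + 1) * (c * riemannLiouvilleKernel (β * ↑(n + 1) + 1) t
            + l * (φ ⋆ₗ riemannLiouvilleKernel (β * ↑(n + 1 + 1))) t) := by gcongr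
      _ = _ := by rw [Finset.sum_range_succ _ (n + 1)]; ring

lemma lconvolution_riemannLiouvilleKernel_le_mul_lintegral (hφ : ∀ y ≤ 0, φ y = 0) {γ : ℝ}
    (hγ : 1 ≤ γ) (t : ℝ) :
    (φ ⋆ₗ riemannLiouvilleKernel γ) t
      ≤ (∫⁻ y, φ y) * ENNReal.ofReal (t ^ (γ - 1) / Real.Gamma γ) := by
  rw [lconvolution_def, ← lintegral_mul_const' _ _ ENNReal.ofReal_ne_top]
  refine lintegral_mono fun y => ?_
  rcases le_or_gt y 0 with hy0 | hy0
  · simp [hφ y hy0]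
  rcases le_or_gt t y with hyt | hyt
  · simp [riemannLiouvilleKernel_of_nonpos (by linarith : -y + t ≤ 0)]
  rw [riemannLiouvilleKernel_of_pos (by linarith)]
  gcongr <;> linarith

lemma pow_mul_rpow_sub_one_div_Gamma {β ℓ t : ℝ} (hβ : 0 < β) (ht : 0 < t) {m : ℕ}
    (hm : m ≠ 0) :
    ℓ ^ m * (t ^ (β * m - 1) / Real.Gamma (β * m))
      = β / t * (m * ((ℓ * t ^ β) ^ m / Real.Gamma (β * m + 1))) := by
  have hβm : 0 < β * m := by positivity
  rw [Real.Gamma_add_one hβm.ne', Real.rpow_sub_one ht.ne', mul_pow, Real.rpow_mul ht.le,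
    Real.rpow_natCast]
  have := (Real.Gamma_pos_of_pos hβm).ne'
  field_simp

theorem le_mul_ofReal_mittagLeffler (hβ : 0 < β) (hφ : AEMeasurable φ)
    (hφ0 : ∀ y ≤ 0, φ y = 0) (hφint : ∫⁻ y, φ y ≠ ∞) (hc : c ≠ ∞) {ℓ : ℝ} (hℓ : 0 ≤ ℓ)
    (ht : 0 < t)
    (h : ∀ y ≤ t, φ y ≤ c * riemannLiouvilleKernel 1 y
      + ENNReal.ofReal ℓ * (φ ⋆ₗ riemannLiouvilleKernel β) y) :
    φ t ≤ c * ENNReal.ofReal (mittagLeffler β (ℓ * t ^ β)) := by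
  set z := ℓ * t ^ β
  have hz : 0 ≤ z := by positivity
  have hterm (j : ℕ) : ENNReal.ofReal ℓ ^ j * riemannLiouvilleKernel (β * j + 1) t
      = ENNReal.ofReal (z ^ j / Real.Gamma (β * j + 1)) := by
    rw [riemannLiouvilleKernel_of_pos ht, ← ENNReal.ofReal_pow hℓ,
      ← ENNReal.ofReal_mul (by positivity), add_sub_cancel_right, mul_div_assoc', mul_pow,
      Real.rpow_mul ht.le, Real.rpow_natCast]
  have hsum : Tendsto (fun n => ∑ j ∈ Finset.range (n + 1),
      ENNReal.ofReal (z ^ j / Real.Gamma (β * j + 1))) atTop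
      (𝓝 (ENNReal.ofReal (mittagLeffler β z))) := by
    rw [mittagLeffler, ENNReal.ofReal_tsum_of_nonneg (fun j => by positivity)
      (summable_mittagLeffler hβ hz)]
    exact ENNReal.tendsto_nat_tsum _ |>.comp (tendsto_add_atTop_nat 1)
  have hrem : Tendsto (fun n : ℕ => (∫⁻ y, φ y) * ENNReal.ofReal
      (β / t * (↑(n + 1) * (z ^ (n + 1) / Real.Gamma (β * ↑(n + 1) + 1))))) atTop
      (𝓝 0) := by
    have := ((tendsto_nat_mul_mittagLeffler_term hβ hz).const_mul (β / t)).comp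
      (tendsto_add_atTop_nat 1)
    rw [mul_zero] at this
    simpa using ENNReal.Tendsto.const_mul (ENNReal.tendsto_ofReal this) (Or.inr hφint)
  have hlim := (ENNReal.Tendsto.const_mul hsum (Or.inr hc)).add hrem
  rw [add_zero] at hlim
  refine ge_of_tendsto hlim ?_
  filter_upwards [(tendsto_natCast_atTop_atTop.const_mul_atTop hβ).eventually_ge_atTop 1]
    with n hn
  have hn1 : 1 ≤ β * ↑(n + 1) := hn.trans (by gcongr; omega)
  refine (le_sum_add_lconvolution_riemannLiouvilleKernel hβ hφ h n).trans <|
    (add_le_add_right (mul_le_mul_right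
      (lconvolution_riemannLiouvilleKernel_le_mul_lintegral hφ0 hn1 t) _) _).trans_eq ?_
  simp_rw [hterm]
  rw [mul_left_comm, ← ENNReal.ofReal_pow hℓ, ← ENNReal.ofReal_mul (by positivity),
    pow_mul_rpow_sub_one_div_Gamma hβ ht n.succ_ne_zero]

end Gronwall

lemma ofReal_integral_le_lintegral_ofReal {α : Type*} [MeasurableSpace α] {μ : Measure α}
    (f : α → ℝ) :
    ENNReal.ofReal (∫ x, f x ∂μ) ≤ ∫⁻ x, ENNReal.ofReal (f x) ∂μ := by
  by_cases hf : Integrable f μ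
  · rw [integral_eq_lintegral_pos_part_sub_lintegral_neg_part hf]
    exact (ENNReal.ofReal_le_ofReal (sub_le_self _ ENNReal.toReal_nonneg)).trans
      ENNReal.ofReal_toReal_le
  · simp [integral_undef hf]

lemma ofReal_integral_le_lconvolution_riemannLiouvilleKernel {β b t y : ℝ} {η : ℝ → ℝ}
    (hβ : 0 < β) (hb : 0 ≤ b) (hy0 : 0 < y) (hy : y ≤ t) :
    ENNReal.ofReal (b * ∫ s in (0:ℝ)..y, (y - s) ^ (β - 1) * η s)
      ≤ ENNReal.ofReal (b * Real.Gamma β)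
        * ((Ioc 0 t).indicator (fun s => ENNReal.ofReal (η s))
          ⋆ₗ riemannLiouvilleKernel β) y := by
  have hΓ := Real.Gamma_pos_of_pos hβ
  rw [ENNReal.ofReal_mul hb, ENNReal.ofReal_mul hb, mul_assoc, integral_of_le hy0.le]
  gcongr
  calc ENNReal.ofReal (∫ s in Ioc 0 y, (y - s) ^ (β - 1) * η s)
      ≤ ∫⁻ s in Ioc 0 y, ENNReal.ofReal ((y - s) ^ (β - 1) * η s) :=
        ofReal_integral_le_lintegral_ofReal _
    _ = ∫⁻ s in Ioo 0 y, ENNReal.ofReal (Real.Gamma β)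
          * ((Ioc 0 t).indicator (fun s => ENNReal.ofReal (η s)) s
            * ENNReal.ofReal ((y - s) ^ (β - 1) / Real.Gamma β)) := by
        rw [setLIntegral_congr Ioo_ae_eq_Ioc.symm]
        refine setLIntegral_congr_fun measurableSet_Ioo fun s hs => ?_
        rw [indicator_of_mem (show s ∈ Ioc 0 t from ⟨hs.1, hs.2.le.trans hy⟩), mul_left_comm,
          ← ENNReal.ofReal_mul hΓ.le, mul_div_cancel₀ _ hΓ.ne',
          ENNReal.ofReal_mul (Real.rpow_nonneg (by linarith [hs.2]) _), mul_comm]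
    _ ≤ _ := by
        rw [lintegral_const_mul' _ _ ENNReal.ofReal_ne_top,
          lconvolution_riemannLiouvilleKernel_apply]
        gcongr
        exact Ioo_subset_Iio_self

lemma indicator_ofReal_le_add_lconvolution {β b t A : ℝ} {η : ℝ → ℝ} (hβ : 0 < β)
    (hb : 0 ≤ b) (h : ∀ y ∈ Ioc 0 t, η y ≤ A + b * ∫ s in (0:ℝ)..y, (y - s) ^ (β - 1) * η s)
    (y : ℝ) :
    (Ioc 0 t).indicator (fun s => ENNReal.ofReal (η s)) y
      ≤ ENNReal.ofReal A * riemannLiouvilleKernel 1 y + ENNReal.ofReal (b * Real.Gamma β)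
        * ((Ioc 0 t).indicator (fun s => ENNReal.ofReal (η s))
          ⋆ₗ riemannLiouvilleKernel β) y := by
  by_cases hy : y ∈ Ioc 0 t
  · rw [indicator_of_mem hy, riemannLiouvilleKernel_of_pos hy.1]
    simp only [sub_self, Real.rpow_zero, Real.Gamma_one, div_one, ENNReal.ofReal_one, mul_one]
    exact (ENNReal.ofReal_le_ofReal (h y hy)).trans <| ENNReal.ofReal_add_le.trans <|
      add_le_add_right (ofReal_integral_le_lconvolution_riemannLiouvilleKernel hβ hb hy.1 hy.2) _
  · simp [indicator_of_notMem hy]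

theorem fractional_gronwall_general (T β b : ℝ) (hβ : β ∈ Set.Ioo (0:ℝ) 1)
    (hb : 0 < b) (a η : ℝ → ℝ)
    (ha0 : ∀ t, 0 ≤ t → t < T → 0 ≤ a t)
    (hamono : ∀ s t, 0 ≤ s → s ≤ t → t < T → a s ≤ a t)
    (hηint : ∀ t, 0 ≤ t → t < T → IntervalIntegrable η volume 0 t)
    (hineq : ∀ t, 0 ≤ t → t < T →
      η t ≤ a t + b * ∫ s in (0:ℝ)..t, (t - s) ^ (β - 1) * η s)
    (t : ℝ) (ht0 : 0 ≤ t) (htT : t < T) :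
    η t ≤ a t * mittagLeffler β (b * Real.Gamma β * t ^ β) := by
  rcases ht0.eq_or_lt with rfl | ht
  · simpa [mittagLeffler_zero, Real.zero_rpow hβ.1.ne'] using hineq 0 le_rfl htT
  have hℓ : 0 ≤ b * Real.Gamma β := mul_nonneg hb.le (Real.Gamma_pos_of_pos hβ.1).le
  have hη : IntegrableOn η (Ioc 0 t) :=
    (intervalIntegrable_iff_integrableOn_Ioc_of_le ht0).1 (hηint t ht0 htT)
  have key := le_mul_ofReal_mittagLeffler hβ.1
    ((aemeasurable_indicator_iff measurableSet_Ioc).2 hη.aemeasurable.ennreal_ofReal)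
    (fun y hy => indicator_of_notMem (fun h => hy.not_gt h.1) _)
    (by rw [lintegral_indicator measurableSet_Ioc]; exact hη.setLIntegral_lt_top.ne)
    ENNReal.ofReal_ne_top hℓ ht
    fun y _ => indicator_ofReal_le_add_lconvolution hβ.1 hb.le (fun y hy =>
      (hineq y hy.1.le (hy.2.trans_lt htT)).trans
        (by gcongr; exact hamono y t hy.1.le hy.2 htT)) y
  rw [indicator_of_mem (right_mem_Ioc.2 ht), ← ENNReal.ofReal_mul (ha0 t ht0 htT)] at key
  exact (ENNReal.ofReal_le_ofReal_iff (mul_nonneg (ha0 t ht0 htT)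
    (mittagLeffler_nonneg hβ.1.le (by positivity)))).1 key

/-- Fractional Gronwall lemma: if `η(t) ≤ a(t) + b ∫₀ᵗ (t-s)^{β-1} η(s) ds` on `[0,T)`,
with `a` nonnegative nondecreasing locally integrable and `η` nonnegative locally
integrable, then `η(t) ≤ a(t) E_β(b Γ(β) t^β)`. -/
theorem fractional_gronwall (T β b : ℝ) (hT : 0 < T) (hβ : β ∈ Set.Ioo (0:ℝ) 1)
    (hb : 0 < b) (a η : ℝ → ℝ)
    (ha0 : ∀ t, 0 ≤ t → t < T → 0 ≤ a t)
    (hamono : ∀ s t, 0 ≤ s → s ≤ t → t < T → a s ≤ a t)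
    (haint : ∀ t, 0 ≤ t → t < T → IntervalIntegrable a volume 0 t)
    (hη0 : ∀ t, 0 ≤ t → t < T → 0 ≤ η t)
    (hηint : ∀ t, 0 ≤ t → t < T → IntervalIntegrable η volume 0 t)
    (hineq : ∀ t, 0 ≤ t → t < T →
      η t ≤ a t + b * ∫ s in (0:ℝ)..t, (t - s) ^ (β - 1) * η s)
    (t : ℝ) (ht0 : 0 ≤ t) (htT : t < T) :
    η t ≤ a t * mittagLeffler β (b * Real.Gamma β * t ^ β) :=
  fractional_gronwall_general T β b hβ hb a η ha0 hamono hηint hineq t ht0 htT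
end
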